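/- Let k ≥ 1, let G be a minimally (k+1)-matchable graph, and let H be a spanning subgraph of G that is minimally k-matchable. If E(G) \ E(H) is nonempty, then E(G) \ E(H) is contained in some perfect matching of G; in particular, E(G) \ E(H) is a matching of G (no two of its edges share an endvertex). -/

import Mathlib

/-!
Let `e` be an edge of `G` not in `H`. Every perfect matching of `H` is one of `G - e`, and
`G - e` has at most `k` perfect matchings while `H` has at least `k`, so `G - e` and `H`
have the same perfect matchings. As `G` has more perfect matchings than `H`, some perfect
matching `M` of `G` is not one of `H`; then `M` contains every such `e`, for otherwise it
would be a perfect matching of `G - e`.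
-/

open SimpleGraph

/-- `M` is a perfect matching of the graph `G`, viewed as a set of edges:
every vertex is an endvertex of exactly one member of `M`. -/
def IsPerfMatching {V : Type*} (G : SimpleGraph V) (M : Set (Sym2 V)) : Prop :=
  M ⊆ G.edgeSet ∧ ∀ v : V, ∃! e, e ∈ M ∧ v ∈ e

/-- The number of perfect matchings of `G`. -/
noncomputable def numPM {V : Type*} (G : SimpleGraph V) : ℕ :=
  {M : Set (Sym2 V) | IsPerfMatching G M}.ncard

/-- `G` is `k`-matchable: it has at least `k` perfect matchings. -/
def Matchable {V : Type*} (k : ℕ) (G : SimpleGraph V) : Prop :=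
  k ≤ numPM G

/-- `G` is minimally `k`-matchable. -/
def MinMatchable {V : Type*} (k : ℕ) (G : SimpleGraph V) : Prop :=
  Matchable k G ∧ ∀ e ∈ G.edgeSet, ¬ Matchable k (G.deleteEdges {e})

/-- `H` is an odd subdivision of `G`: every edge of `G` is replaced by a path of odd
length connecting its endvertices, all these paths pairwise internally disjoint. -/
def IsOddSubdivisionOf {W V : Type*} (H : SimpleGraph W) (G : SimpleGraph V) : Prop :=
  ∃ (f : V ↪ W) (P : ∀ u v : V, G.Adj u v → H.Walk (f u) (f v)),
    (∀ u v (h : G.Adj u v), P v u h.symm = (P u v h).reverse) ∧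
    (∀ u v (h : G.Adj u v), (P u v h).IsPath) ∧
    (∀ u v (h : G.Adj u v), Odd (P u v h).length) ∧
    (∀ u v (h : G.Adj u v), ∀ w ∈ (P u v h).support,
        (∃ x, w = f x) → w = f u ∨ w = f v) ∧
    (∀ u v (h : G.Adj u v) u' v' (h' : G.Adj u' v'), s(u, v) ≠ s(u', v') →
        ∀ w, w ∈ (P u v h).support → w ∈ (P u' v' h').support → ∃ x, w = f x) ∧
    (∀ w : W, (∃ x, w = f x) ∨ ∃ (u v : _) (h : G.Adj u v), w ∈ (P u v h).support) ∧
    (∀ e ∈ H.edgeSet, ∃ (u v : _) (h : G.Adj u v), e ∈ (P u v h).edges)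

/-- `G` is the disjoint union of an odd subdivision of `H` and any number (possibly zero)
of vertex-disjoint copies of `K₂`: there is a set `A` of vertices such that no edge of `G`
joins `A` to its complement, every vertex outside `A` has exactly one neighbour (these
vertices span the copies of `K₂`), and the subgraph induced on `A` is an odd subdivision
of `H`. -/
def IsOddSubdivPlusK2 {W V : Type*} (H : SimpleGraph W) (G : SimpleGraph V) : Prop :=
  ∃ A : Set V,
    (∀ e ∈ G.edgeSet, (∀ v ∈ e, v ∈ A) ∨ (∀ v ∈ e, v ∉ A)) ∧
    (∀ v : V, v ∉ A → ∃! w, G.Adj v w) ∧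
    IsOddSubdivisionOf (G.induce A) H

section PerfectMatchings

variable {V : Type*} {G G' : SimpleGraph V} {M : Set (Sym2 V)}

theorem IsPerfMatching.mono (h : G ≤ G') (hM : IsPerfMatching G M) : IsPerfMatching G' M :=
  ⟨hM.1.trans (edgeSet_mono h), hM.2⟩

theorem isPerfMatching_deleteEdges_singleton_iff {e : Sym2 V} :
    IsPerfMatching (G.deleteEdges {e}) M ↔ IsPerfMatching G M ∧ e ∉ M := by
  simp only [IsPerfMatching, edgeSet_deleteEdges, Set.subset_sdiff,
    Set.disjoint_singleton_right]
  tauto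

theorem IsPerfMatching.eq_of_mem_of_mem (hM : IsPerfMatching G M) {v : V} {e f : Sym2 V}
    (he : e ∈ M) (hf : f ∈ M) (hve : v ∈ e) (hvf : v ∈ f) : e = f :=
  (hM.2 v).unique ⟨he, hve⟩ ⟨hf, hvf⟩

theorem finite_setOf_isPerfMatching_of_matchable {k : ℕ} (hG : Matchable (k + 1) G) :
    {M | IsPerfMatching G M}.Finite :=
  Set.finite_of_ncard_pos (Nat.lt_of_lt_of_le k.succ_pos hG)

theorem setOf_isPerfMatching_eq_of_le (h : G ≤ G') (hfin : {M | IsPerfMatching G' M}.Finite)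
    (hcard : numPM G' ≤ numPM G) :
    {M | IsPerfMatching G M} = {M | IsPerfMatching G' M} :=
  Set.eq_of_subset_of_ncard_le (fun _ hM ↦ IsPerfMatching.mono h hM) hcard hfin

theorem exists_isPerfMatching_not_of_numPM_lt (h : G' ≤ G) (hlt : numPM G' < numPM G) :
    ∃ M, IsPerfMatching G M ∧ ¬ IsPerfMatching G' M := by
  by_contra! hsub
  have heq : {M | IsPerfMatching G M} = {M | IsPerfMatching G' M} :=
    Set.Subset.antisymm hsub fun _ hM ↦ IsPerfMatching.mono h hM
  exact hlt.ne (by rw [numPM, numPM, heq])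

theorem MinMatchable.numPM_deleteEdges_le {k : ℕ} (hG : MinMatchable (k + 1) G) {e : Sym2 V}
    (he : e ∈ G.edgeSet) : numPM (G.deleteEdges {e}) ≤ k :=
  Nat.le_of_lt_succ (not_le.mp (hG.2 e he))

theorem MinMatchable.setOf_isPerfMatching_deleteEdges_eq {k : ℕ} {H : SimpleGraph V}
    (hG : MinMatchable (k + 1) G) (hH : Matchable k H) {e : Sym2 V}
    (he : e ∈ G.edgeSet \ H.edgeSet) (hHG : H ≤ G) :
    {M | IsPerfMatching H M} = {M | IsPerfMatching (G.deleteEdges {e}) M} := by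
  have hle : H ≤ G.deleteEdges {e} := by
    rw [← edgeSet_subset_edgeSet, edgeSet_deleteEdges, Set.subset_sdiff,
      Set.disjoint_singleton_right]
    exact ⟨edgeSet_mono hHG, he.2⟩
  have hfin : {M | IsPerfMatching (G.deleteEdges {e}) M}.Finite :=
    (finite_setOf_isPerfMatching_of_matchable hG.1).subset
      fun _ hM ↦ IsPerfMatching.mono (deleteEdges_le _) hM
  exact setOf_isPerfMatching_eq_of_le hle hfin ((hG.numPM_deleteEdges_le he.1).trans hH)

end PerfectMatchings

theorem new_edges_form_matching_general (k : ℕ) {V : Type}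
    (G H : SimpleGraph V) (hHG : H ≤ G)
    (hG : MinMatchable (k + 1) G) (hH : MinMatchable k H)
    (hne : (G.edgeSet \ H.edgeSet).Nonempty) :
    (∃ M : Set (Sym2 V), IsPerfMatching G M ∧ G.edgeSet \ H.edgeSet ⊆ M) ∧
    (∀ e ∈ G.edgeSet \ H.edgeSet, ∀ f ∈ G.edgeSet \ H.edgeSet, e ≠ f →
      ∀ v : V, ¬ (v ∈ e ∧ v ∈ f)) := by
  have hPM {e} (he : e ∈ G.edgeSet \ H.edgeSet) :=
    hG.setOf_isPerfMatching_deleteEdges_eq hH.1 he hHG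
  obtain ⟨e₀, he₀⟩ := hne
  have hHk : numPM H ≤ k := by
    rw [numPM, hPM he₀]
    exact hG.numPM_deleteEdges_le he₀.1
  obtain ⟨M, hM, hMH⟩ := exists_isPerfMatching_not_of_numPM_lt hHG (hHk.trans_lt hG.1)
  have hsub : G.edgeSet \ H.edgeSet ⊆ M := fun e he ↦ by
    by_contra heM
    have hMe : M ∈ {M | IsPerfMatching (G.deleteEdges {e}) M} :=
      isPerfMatching_deleteEdges_singleton_iff.mpr ⟨hM, heM⟩
    exact hMH (by rwa [← hPM he] at hMe)
  exact ⟨⟨M, hM, hsub⟩, fun e he f hf hef v ⟨hve, hvf⟩ ↦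
    hef (hM.eq_of_mem_of_mem (hsub he) (hsub hf) hve hvf)⟩

/-- **Claim 1 (second part).** Let `G` be minimally `(k+1)`-matchable and `H` a spanning
minimally `k`-matchable subgraph of `G`. If `E(G) \ E(H)` is nonempty, then it is contained
in some perfect matching of `G`; in particular `E(G) \ E(H)` is a matching of `G`
(no two of its edges share an endvertex). -/
theorem new_edges_form_matching (k : ℕ) (hk : 1 ≤ k) {V : Type} [Fintype V]
    (G H : SimpleGraph V) (hHG : H ≤ G)
    (hG : MinMatchable (k + 1) G) (hH : MinMatchable k H)
    (hne : (G.edgeSet \ H.edgeSet).Nonempty) :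
    (∃ M : Set (Sym2 V), IsPerfMatching G M ∧ G.edgeSet \ H.edgeSet ⊆ M) ∧
    (∀ e ∈ G.edgeSet \ H.edgeSet, ∀ f ∈ G.edgeSet \ H.edgeSet, e ≠ f →
      ∀ v : V, ¬ (v ∈ e ∧ v ∈ f)) :=
  new_edges_form_matching_general k G H hHG hG hH hne
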